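/- Direction separation implies the Wolff axiom up to a constant: there exists an absolute constant C > 0 such that for all 0 < δ < 1, every finite direction-separated family 𝕋 of δ-tubes in ℝ³ satisfies #{T ∈ 𝕋 : T ⊆ R} ≤ C · δ^{−2} · |R| for every rectangular prism R ⊆ ℝ³. -/

import Mathlib

/-!
If a `δ`-tube with direction `ω` lies in a prism with axes `eₖ` and half-lengths `rₖ`, the tube
contains two points whose `eₖ`-coordinates differ by `|⟪ω, eₖ⟫| + 2δ`, so `|ωₖ| + 2δ ≤ 2rₖ` in the
prism's coordinates. Every unit vector lies in one of the six caps `{±ωₖ ≥ 1/2}`, and on such a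
cap `ωₖ` is `2`-Lipschitz in the two other coordinates; hence projecting a cap's `δ`-separated
directions to those coordinates yields `δ/6`-separated points of a rectangle with sides
`O(r_l)`, at most `O(r_l r_l' / δ²)` of them by a grid count. As `rₖ ≥ 1/4` on a nonempty cap,
the count is `O(r₁ r₂ r₃ / δ²) = O(δ⁻² |R|)`.
-/

open MeasureTheory
open scoped ENNReal

/-- The `δ`-tube `T_{ω,a}`: the closed `δ`-neighborhood of the unit line segment
`ℓ_{ω,a} = {a + t•ω : t ∈ [0,1]}`. -/
def deltaTube (δ : ℝ) (ω a : EuclideanSpace ℝ (Fin 3)) : Set (EuclideanSpace ℝ (Fin 3)) :=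
  Metric.cthickening δ ((fun t : ℝ => a + t • ω) '' Set.Icc 0 1)

/-- A rectangular prism in `ℝ³`: a set of the form
`{x : |⟨x − c, eᵢ⟩| ≤ rᵢ, i = 1,2,3}` for some centre `c`, orthonormal basis `(e₁,e₂,e₃)`
and side half-lengths `rᵢ > 0`. -/
def IsRectPrism (R : Set (EuclideanSpace ℝ (Fin 3))) : Prop :=
  ∃ (c : EuclideanSpace ℝ (Fin 3)) (e : Fin 3 → EuclideanSpace ℝ (Fin 3)) (r : Fin 3 → ℝ),
    Orthonormal ℝ e ∧ (∀ i, 0 < r i) ∧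
    R = {x | ∀ i, |(inner ℝ (x - c) (e i) : ℝ)| ≤ r i}

open Finset

section Prism

variable {ι : Type*} [Fintype ι]

theorem exists_orthonormalBasis_coe_eq {e : ι → EuclideanSpace ℝ ι} (he : Orthonormal ℝ e) :
    ∃ b : OrthonormalBasis ι ℝ (EuclideanSpace ℝ ι), ⇑b = e :=
  ⟨OrthonormalBasis.mk he (he.linearIndependent.span_eq_top_of_card_eq_finrank'
    finrank_euclideanSpace.symm).ge, OrthonormalBasis.coe_mk _ _⟩

theorem volume_setOf_abs_inner_sub_le (c : EuclideanSpace ℝ ι) {e : ι → EuclideanSpace ℝ ι}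
    (he : Orthonormal ℝ e) (r : ι → ℝ) :
    volume {x | ∀ i, |(inner ℝ (x - c) (e i) : ℝ)| ≤ r i} = ∏ i, ENNReal.ofReal (2 * r i) := by
  obtain ⟨b, rfl⟩ := exists_orthonormalBasis_coe_eq he
  have hcoord : MeasurePreserving (fun x => (b.repr (x - c)).ofLp) volume volume :=
    (EuclideanSpace.volume_preserving_symm_measurableEquiv_toLp ι).comp
      (b.measurePreserving_repr.comp (measurePreserving_sub_right volume c))
  have hset : {x | ∀ i, |(inner ℝ (x - c) (b i) : ℝ)| ≤ r i}
      = (fun x => (b.repr (x - c)).ofLp) ⁻¹' Set.univ.pi fun i => Set.Icc (-r i) (r i) := by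
    ext x
    simp only [Set.mem_ofPred_eq, Set.mem_preimage, Set.mem_univ_pi, Set.mem_Icc,
      b.repr_apply_apply, real_inner_comm, abs_le]
  rw [hset, hcoord.measure_preimage
    (MeasurableSet.univ_pi fun _ => measurableSet_Icc).nullMeasurableSet, volume_pi_pi]
  simp [Real.volume_Icc, two_mul]

end Prism

theorem mem_deltaTube_of_norm_sub_le {δ t : ℝ} {ω a x : EuclideanSpace ℝ (Fin 3)}
    (ht : t ∈ Set.Icc 0 1) (hx : ‖x - (a + t • ω)‖ ≤ δ) : x ∈ deltaTube δ ω a :=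
  Metric.mem_cthickening_of_dist_le x _ δ _ ⟨t, ht, rfl⟩ (by rwa [dist_eq_norm])

theorem abs_inner_add_two_mul_le_of_deltaTube_subset {δ r : ℝ} {ω a c e : EuclideanSpace ℝ (Fin 3)}
    (hδ : 0 ≤ δ) (he : ‖e‖ = 1) (h : deltaTube δ ω a ⊆ {x | |(inner ℝ (x - c) e : ℝ)| ≤ r}) :
    |(inner ℝ ω e : ℝ)| + 2 * δ ≤ 2 * r := by
  have hee : (inner ℝ e e : ℝ) = 1 := by rw [real_inner_self_eq_norm_sq, he, one_pow]
  -- The tube contains `a + ω + σδe` and `a - σδe`, whose `e`-coordinates differ by `⟪ω, e⟫ + 2σδ`.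
  have key : ∀ σ : ℝ, |σ| = 1 → σ * inner ℝ ω e + 2 * δ ≤ 2 * r := by
    intro σ hσ
    have hshift : ‖(σ * δ) • e‖ = δ := by
      rw [norm_smul, he, Real.norm_eq_abs, abs_mul, hσ, abs_of_nonneg hδ, one_mul, mul_one]
    have htop := h (mem_deltaTube_of_norm_sub_le (x := a + (1 : ℝ) • ω + (σ * δ) • e) (t := 1)
      (by simp) (by rw [add_sub_cancel_left, hshift]))
    have hbot := h (mem_deltaTube_of_norm_sub_le (x := a + (0 : ℝ) • ω - (σ * δ) • e) (t := 0)
      (by simp) (by rw [sub_sub_cancel_left, norm_neg, hshift]))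
    simp only [Set.mem_ofPred_eq, inner_sub_left, inner_add_left, real_inner_smul_left, hee]
      at htop hbot
    set X := inner ℝ a e + 1 * inner ℝ ω e + σ * δ * 1 - inner ℝ c e
    set Y := inner ℝ a e + 0 * inner ℝ ω e - σ * δ * 1 - inner ℝ c e
    have hσσ : σ * σ = 1 := by rw [← abs_mul_abs_self, hσ, one_mul]
    calc σ * inner ℝ ω e + 2 * δ = σ * (X - Y) := by linear_combination (-2 * δ) * hσσ
      _ ≤ |X - Y| := by simpa [abs_mul, hσ] using le_abs_self (σ * (X - Y))
      _ ≤ |X| + |Y| := abs_sub _ _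
      _ ≤ 2 * r := by linarith
  rcases abs_cases (inner ℝ ω e : ℝ) with ⟨habs, -⟩ | ⟨habs, -⟩
  · simpa [habs] using key 1 (by simp)
  · simpa [habs] using key (-1) (by simp)

section Sphere

variable {ι : Type*} [Fintype ι]

theorem EuclideanSpace.norm_le_sum_abs (w : EuclideanSpace ℝ ι) : ‖w‖ ≤ ∑ l, |w l| := by
  have hsq : ‖w‖ ^ 2 ≤ (∑ l, |w l|) ^ 2 := by
    rw [EuclideanSpace.real_norm_sq_eq]
    simpa only [sq_abs] using sum_sq_le_sq_sum_of_nonneg (s := univ) (f := fun l => |w l|)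
      fun _ _ => abs_nonneg _
  exact (pow_le_pow_iff_left₀ (norm_nonneg _) (sum_nonneg fun _ _ => abs_nonneg _)
    two_ne_zero).1 hsq

variable [DecidableEq ι] {u v : EuclideanSpace ℝ ι} {k : ι}

theorem abs_sub_apply_le_two_mul_sum_erase (hu : ‖u‖ = 1) (hv : ‖v‖ = 1) (huk : 1 / 2 ≤ u k)
    (hvk : 1 / 2 ≤ v k) : |u k - v k| ≤ 2 * ∑ l ∈ univ.erase k, |u l - v l| := by
  have hsum_sq : ∀ w : EuclideanSpace ℝ ι, ‖w‖ = 1 → ∑ l, w l ^ 2 = 1 := fun w hw => by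
    rw [← EuclideanSpace.real_norm_sq_eq, hw, one_pow]
  have hcoord : ∀ w : EuclideanSpace ℝ ι, ‖w‖ = 1 → ∀ l, |w l| ≤ 1 := fun w hw l => by
    simpa [hw] using PiLp.norm_apply_le w l
  have hsplit : (u k - v k) * (u k + v k) = ∑ l ∈ univ.erase k, (v l - u l) * (v l + u l) := by
    have htotal : ∑ l, (u l ^ 2 - v l ^ 2) = 0 := by
      rw [sum_sub_distrib, hsum_sq u hu, hsum_sq v hv, sub_self]
    have h := add_sum_erase univ (fun l => u l ^ 2 - v l ^ 2) (mem_univ k)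
    rw [htotal] at h
    have hneg : ∑ l ∈ univ.erase k, (v l - u l) * (v l + u l)
        = -∑ l ∈ univ.erase k, (u l ^ 2 - v l ^ 2) := by
      rw [← sum_neg_distrib]
      exact sum_congr rfl fun l _ => by ring
    rw [hneg]
    linear_combination h
  calc |u k - v k| ≤ |u k - v k| * (u k + v k) :=
        le_mul_of_one_le_right (abs_nonneg _) (by linarith)
    _ = |∑ l ∈ univ.erase k, (v l - u l) * (v l + u l)| := by
        rw [← hsplit, abs_mul, abs_of_pos (by linarith : 0 < u k + v k)]
    _ ≤ ∑ l ∈ univ.erase k, |u l - v l| * 2 := by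
        refine (abs_sum_le_sum_abs _ _).trans (sum_le_sum fun l _ => ?_)
        rw [abs_mul, abs_sub_comm]
        have := abs_add_le (v l) (u l)
        have := hcoord u hu l
        have := hcoord v hv l
        gcongr
        linarith
    _ = 2 * ∑ l ∈ univ.erase k, |u l - v l| := by rw [← sum_mul, mul_comm]

theorem norm_sub_le_three_mul_sum_erase (hu : ‖u‖ = 1) (hv : ‖v‖ = 1) (huk : 1 / 2 ≤ u k)
    (hvk : 1 / 2 ≤ v k) : ‖u - v‖ ≤ 3 * ∑ l ∈ univ.erase k, |u l - v l| :=
  calc ‖u - v‖ ≤ ∑ l, |u l - v l| := by simpa using EuclideanSpace.norm_le_sum_abs (u - v)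
    _ = |u k - v k| + ∑ l ∈ univ.erase k, |u l - v l| := (add_sum_erase _ _ (mem_univ k)).symm
    _ ≤ 3 * ∑ l ∈ univ.erase k, |u l - v l| := by
        linarith [abs_sub_apply_le_two_mul_sum_erase hu hv huk hvk]

end Sphere

theorem ncard_le_prod_of_separated {α ι : Type*} [Fintype ι] {F : Set α} {p : α → ι → ℝ}
    {ε : ℝ} {s : ι → ℝ} (hε : 0 < ε) (hs : ∀ l, ε ≤ s l) (hbox : ∀ i ∈ F, ∀ l, |p i l| ≤ s l)
    (hsep : ∀ i ∈ F, ∀ j ∈ F, i ≠ j → ∃ l, ε ≤ |p i l - p j l|) :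
    (F.ncard : ℝ) ≤ ∏ l, 4 * (s l / ε) := by
  classical
  set cell : α → ι → ℤ := fun i l => ⌊p i l / ε⌋
  set grid := Finset.Icc (fun l => ⌊-s l / ε⌋) (fun l => ⌊s l / ε⌋)
  have hmaps : ∀ i ∈ F, cell i ∈ (grid : Set (ι → ℤ)) := fun i hi => by
    simp only [grid, coe_Icc, Set.mem_Icc, Pi.le_def]
    exact ⟨fun l => Int.floor_mono (div_le_div_of_nonneg_right
        (neg_le_of_abs_le (hbox i hi l)) hε.le),
      fun l => Int.floor_mono (div_le_div_of_nonneg_right (le_of_abs_le (hbox i hi l)) hε.le)⟩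
  have hinj : Set.InjOn cell F := by
    intro i hi j hj hij
    by_contra hne
    obtain ⟨l, hl⟩ := hsep i hi j hj hne
    have hlt := Int.abs_sub_lt_one_of_floor_eq_floor (congrFun hij l)
    rw [← sub_div, abs_div, abs_of_pos hε, div_lt_one hε] at hlt
    linarith
  have hcard : ∀ l, ((Finset.Icc ⌊-s l / ε⌋ ⌊s l / ε⌋).card : ℝ) ≤ 4 * (s l / ε) := fun l => by
    have hratio : 1 ≤ s l / ε := (one_le_div hε).2 (hs l)
    have hlo : -s l / ε - 1 < ⌊-s l / ε⌋ := Int.sub_one_lt_floor _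
    have hhi : (⌊s l / ε⌋ : ℝ) ≤ s l / ε := Int.floor_le _
    have hle : ⌊-s l / ε⌋ ≤ ⌊s l / ε⌋ + 1 :=
      (Int.floor_mono (div_le_div_of_nonneg_right (by linarith [hs l]) hε.le)).trans
        (le_add_of_nonneg_right zero_le_one)
    have := Int.card_Icc_of_le _ _ hle
    rw [show ((Finset.Icc ⌊-s l / ε⌋ ⌊s l / ε⌋).card : ℝ)
      = (((Finset.Icc ⌊-s l / ε⌋ ⌊s l / ε⌋).card : ℤ) : ℝ) by norm_cast, this]
    push_cast
    linarith [neg_div ε (s l)]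
  calc (F.ncard : ℝ) ≤ grid.card := by
        exact_mod_cast (Set.ncard_le_ncard_of_injOn cell hmaps hinj grid.finite_toSet).trans_eq
          (Set.ncard_coe_finset grid)
    _ = ∏ l, ((Finset.Icc ⌊-s l / ε⌋ ⌊s l / ε⌋).card : ℝ) := by
        simp only [grid, Pi.card_Icc, Nat.cast_prod]
    _ ≤ ∏ l, 4 * (s l / ε) := prod_le_prod (fun _ _ => Nat.cast_nonneg _) fun l _ => hcard l

theorem exists_half_le_abs_apply {v : EuclideanSpace ℝ (Fin 3)} (hv : ‖v‖ = 1) :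
    ∃ k, 1 / 2 ≤ |v k| := by
  by_contra! h
  have hsq : ∑ l, v l ^ 2 = 1 := by rw [← EuclideanSpace.real_norm_sq_eq, hv, one_pow]
  rw [Fin.sum_univ_three] at hsq
  have h0 := h 0
  have h1 := h 1
  have h2 := h 2
  nlinarith [abs_nonneg (v 0), abs_nonneg (v 1), abs_nonneg (v 2), sq_abs (v 0), sq_abs (v 1),
    sq_abs (v 2)]

section UnitVectors

variable {α : Type*} {F : Set α} {u : α → EuclideanSpace ℝ (Fin 3)} {δ : ℝ} {r : Fin 3 → ℝ}

theorem ncard_le_of_separated_in_cap (hδ : 0 < δ) (hr : ∀ l, 0 ≤ r l) (k : Fin 3)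
    (hu : ∀ i ∈ F, ‖u i‖ = 1) (hsep : ∀ i ∈ F, ∀ j ∈ F, i ≠ j → δ ≤ ‖u i - u j‖)
    (hbox : ∀ i ∈ F, ∀ l, |u i l| + 2 * δ ≤ 2 * r l) (hcap : ∀ i ∈ F, 1 / 2 ≤ u i k) :
    (F.ncard : ℝ) ≤ 9216 * (∏ l, r l) / δ ^ 2 := by
  rcases F.eq_empty_or_nonempty with rfl | ⟨i₀, hi₀⟩
  · simp only [Set.ncard_empty, Nat.cast_zero]
    exact div_nonneg (mul_nonneg (by norm_num) (prod_nonneg fun l _ => hr l)) (sq_nonneg δ)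
  obtain ⟨l₁, l₂, hl, hne⟩ : ∃ l₁ l₂, univ.erase k = {l₁, l₂} ∧ l₁ ≠ l₂ := by
    fin_cases k
    exacts [⟨1, 2, by decide, by decide⟩, ⟨0, 2, by decide, by decide⟩,
      ⟨0, 1, by decide, by decide⟩]
  have hprod : ∏ l, r l = r k * (r l₁ * r l₂) := by
    rw [← mul_prod_erase univ r (mem_univ k), hl, prod_pair hne]
  have hrk : 1 / 4 ≤ r k := by
    have := hbox i₀ hi₀ k
    have := (hcap i₀ hi₀).trans (le_abs_self _)
    linarith
  have hgrid := ncard_le_prod_of_separated (F := F) (p := fun i => ![u i l₁, u i l₂])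
    (s := ![2 * r l₁, 2 * r l₂]) (ε := δ / 6) (by positivity)
    (by simp only [Fin.forall_fin_two, Matrix.cons_val_zero, Matrix.cons_val_one]; constructor <;>
      linarith [hbox i₀ hi₀ l₁, hbox i₀ hi₀ l₂, abs_nonneg (u i₀ l₁), abs_nonneg (u i₀ l₂)])
    (fun i hi => by
      simp only [Fin.forall_fin_two, Matrix.cons_val_zero, Matrix.cons_val_one]; constructor <;>
      linarith [hbox i hi l₁, hbox i hi l₂])
    (fun i hi j hj hij => by
      have := (hsep i hi j hj hij).trans
        (norm_sub_le_three_mul_sum_erase (hu i hi) (hu j hj) (hcap i hi) (hcap j hj))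
      rw [hl, sum_pair hne] at this
      simp only [Fin.exists_fin_two]
      by_contra! h
      simp only [Matrix.cons_val_zero, Matrix.cons_val_one] at h
      linarith [h.1, h.2])
  calc (F.ncard : ℝ) ≤ 2304 * (r l₁ * r l₂) / δ ^ 2 := by
        refine hgrid.trans_eq ?_
        simp only [Fin.prod_univ_two, Matrix.cons_val_zero, Matrix.cons_val_one]
        field_simp
        ring
    _ ≤ 9216 * (∏ l, r l) / δ ^ 2 := by
        rw [hprod, div_le_div_iff_of_pos_right (by positivity)]
        nlinarith [mul_nonneg (hr l₁) (hr l₂)]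

theorem ncard_le_of_separated_unit_vectors_in_box [Finite α] (hδ : 0 < δ) (hr : ∀ l, 0 ≤ r l)
    (hu : ∀ i ∈ F, ‖u i‖ = 1) (hsep : ∀ i ∈ F, ∀ j ∈ F, i ≠ j → δ ≤ ‖u i - u j‖)
    (hbox : ∀ i ∈ F, ∀ l, |u i l| + 2 * δ ≤ 2 * r l) :
    (F.ncard : ℝ) ≤ 55296 * (∏ l, r l) / δ ^ 2 := by
  set cap : (α → EuclideanSpace ℝ (Fin 3)) → Fin 3 → Set α := fun w k => {i ∈ F | 1 / 2 ≤ w i k}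
  have hcover : F ⊆ ⋃ k, (cap u k ∪ cap (-u) k) := fun i hi => by
    obtain ⟨k, hk⟩ := exists_half_le_abs_apply (hu i hi)
    refine Set.mem_iUnion.2 ⟨k, ?_⟩
    rcases le_abs'.1 hk with h | h
    · exact Or.inr ⟨hi, by simpa using neg_le_neg h⟩
    · exact Or.inl ⟨hi, h⟩
  have hcap : ∀ w : α → EuclideanSpace ℝ (Fin 3), (∀ i ∈ F, ‖w i‖ = 1) →
      (∀ i ∈ F, ∀ j ∈ F, i ≠ j → δ ≤ ‖w i - w j‖) → (∀ i ∈ F, ∀ l, |w i l| + 2 * δ ≤ 2 * r l) →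
      ∀ k, ((cap w k).ncard : ℝ) ≤ 9216 * (∏ l, r l) / δ ^ 2 := fun w hw hws hwb k =>
    ncard_le_of_separated_in_cap hδ hr k (fun i hi => hw i hi.1)
      (fun i hi j hj => hws i hi.1 j hj.1) (fun i hi => hwb i hi.1) fun i hi => hi.2
  have hcap_neg := hcap (-u) (fun i hi => by simpa using hu i hi)
    (fun i hi j hj hij => by simpa [← sub_eq_neg_add, norm_sub_rev] using hsep i hi j hj hij)
    fun i hi l => by simpa using hbox i hi l
  calc (F.ncard : ℝ) ≤ ∑ k, (((cap u k).ncard : ℝ) + (cap (-u) k).ncard) := by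
        exact_mod_cast (Set.ncard_le_ncard hcover).trans <|
          (Set.ncard_iUnion_le_of_fintype _).trans (sum_le_sum fun k _ => Set.ncard_union_le _ _)
    _ ≤ ∑ _k : Fin 3, 2 * (9216 * (∏ l, r l) / δ ^ 2) :=
        sum_le_sum fun k _ => by linarith [hcap u hu hsep hbox k, hcap_neg k]
    _ = 55296 * (∏ l, r l) / δ ^ 2 := by simp only [sum_const, card_univ, Fintype.card_fin]; ring

end UnitVectors

/-- **Direction separation implies the Wolff axiom up to a constant**: there is an absolute
constant `C > 0` such that for all `0 < δ < 1`, every finite direction-separated family of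
`δ`-tubes in `ℝ³` satisfies `#{T ∈ 𝕋 : T ⊆ R} ≤ C δ⁻² |R|` for every rectangular prism `R`. -/
theorem direction_separated_wolff_axiom :
    ∃ C : ℝ, 0 < C ∧
      ∀ δ : ℝ, 0 < δ → δ < 1 →
        ∀ (m : ℕ) (ω a : Fin m → EuclideanSpace ℝ (Fin 3)),
          (∀ i, ‖ω i‖ = 1) →
          (∀ i j, i ≠ j → δ ≤ ‖ω i - ω j‖) →
          ∀ R : Set (EuclideanSpace ℝ (Fin 3)), IsRectPrism R →
            (({i : Fin m | deltaTube δ (ω i) (a i) ⊆ R}.ncard : ℝ≥0∞)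
              ≤ ENNReal.ofReal (C * δ⁻¹ ^ 2) * volume R) := by
  refine ⟨6912, by norm_num, fun δ hδ _ m ω a hω hsep R hR => ?_⟩
  obtain ⟨c, e, r, he, hr, hRcr⟩ := hR
  obtain ⟨b, rfl⟩ := exists_orthonormalBasis_coe_eq he
  have hcount := ncard_le_of_separated_unit_vectors_in_box
    (F := {i | deltaTube δ (ω i) (a i) ⊆ R})
    (u := fun i => b.repr (ω i)) hδ (fun l => (hr l).le) (fun i _ => by simp [hω])
    (fun i _ j _ hij => by simpa [← map_sub] using hsep i j hij)
    fun i hi l => by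
      rw [b.repr_apply_apply, real_inner_comm]
      exact abs_inner_add_two_mul_le_of_deltaTube_subset hδ.le (b.orthonormal.1 l)
        (hi.trans fun x hx => (hRcr ▸ hx) l)
  subst hRcr
  rw [volume_setOf_abs_inner_sub_le c he r, ← ENNReal.ofReal_natCast,
    ← ENNReal.ofReal_prod_of_nonneg fun l _ => by linarith [hr l],
    ← ENNReal.ofReal_mul (by positivity)]
  refine ENNReal.ofReal_le_ofReal (hcount.trans_eq ?_)
  simp only [Fin.prod_univ_three]
  field_simp
  ring
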